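/- arXiv:2004.14760 — 2 statements merged into one kernel-verified Lean document; each statement's English description precedes it below -/
import Mathlib

section
/- Let m ≥ 2, k ∈ {1,…,m−1}, and let B ⊆ {1,…,2^m−1} be a set of ⌊(4/3)·2^k⌋ consecutive integers. Then every gap of the set ψ(B) ∪ {0,1} is at most 3/2^{k+1}, where ψ(n) = Σ_{i=1}^m ((e_{i−1} + e_i) mod 2)/2^i with e₀ := 0. -/
/-- The `i`-th digit (1-based) of `n` in base `b`, with the convention that the
`0`-th digit is `0`. -/
def nthDigit (b n i : ℕ) : ℕ := if i = 0 then 0 else n / b ^ (i - 1) % b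
/-- The map `ψ(n) = Σ_{i=1}^m ((e_{i-1} + e_i) mod 2)/2^i` with the convention `e₀ = 0`. -/
noncomputable def psiMap (m n : ℕ) : ℝ :=
  ∑ i ∈ Finset.Icc 1 m,
    (((nthDigit 2 n (i - 1) + nthDigit 2 n i) % 2 : ℕ) : ℝ) / (2 : ℝ) ^ i

/-!
Write `K = 2^k`. The first `k + 1` digits of `ψ(n)` depend only on `n mod 2K`, and read as a
binary fraction `j / 2K` they take every value `j < 2K` exactly once: the digits of `ψ` are sums
mod 2 of adjacent binary digits of `n`, so the binary digits of the residue are parities of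
prefixes of `j`. The remaining digits add less than `1 / 2K` and depend only on `⌊n / K⌋`.

Given `x`, let `j = ⌈2K x⌉`; it suffices that the block hits the residue belonging to `j` or
`j + 1`. The residues missed by a block of `⌊4K/3⌋` consecutive integers form a cyclic window in
which any two differ by less than `2K/3`. Let `s` be the `2`-adic valuation of `j + 1`. Passing
from `j` to `j + 1` flips the top binary digit of the residue exactly when `s` is even, and
otherwise only digits in positions `≡ k (mod 2)`; since `K/4 + K/16 + ⋯ < K/3`, for even `s` the
two residues are at cyclic distance between `2K/3` and `4K/3` and cannot both be missed. For odd
`s` the residues of `j - 1` and `j + 2` are those of `j` and `j + 1` shifted by `K`, hence hit,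
with equal tails: their `ψ`-values differ by exactly `3 / 2K`, and one of them lies in
`[x, x + 3/2K]`.
-/

open Finset

namespace PsiGap

def digitSum (n : ℕ) : ℕ := (Nat.digits 2 n).sum

lemma digitSum_eq (n : ℕ) : digitSum n = n % 2 + digitSum (n / 2) := by
  rcases Nat.eq_zero_or_pos n with rfl | hn
  · simp [digitSum]
  · rw [digitSum, Nat.digits_def' one_lt_two hn, List.sum_cons, digitSum]

lemma digitSum_two_mul (n : ℕ) : digitSum (2 * n) = digitSum n := by
  rw [digitSum_eq]; simp

lemma digitSum_two_mul_add_one (n : ℕ) : digitSum (2 * n + 1) = digitSum n + 1 := by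
  rw [digitSum_eq]; simp [Nat.add_mul_div_left, Nat.add_comm]

lemma digitSum_two_pow_mul_sub_one {o : ℕ} (ho : Odd o) (v : ℕ) :
    digitSum (2 ^ v * o - 1) + 1 = v + digitSum (2 ^ v * o) := by
  induction v with
  | zero =>
    obtain ⟨x, rfl⟩ := ho
    simp [digitSum_two_mul, digitSum_two_mul_add_one]
  | succ v ih =>
    have hpos : 0 < 2 ^ v * o := Nat.mul_pos (by positivity) ho.pos
    obtain ⟨y, hy⟩ : ∃ y, 2 ^ v * o = y + 1 := ⟨_, (Nat.succ_pred_eq_of_pos hpos).symm⟩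
    have htwo : 2 ^ (v + 1) * o = 2 * (2 ^ v * o) := by rw [pow_succ', mul_assoc]
    have h : 2 ^ (v + 1) * o - 1 = 2 * y + 1 := by rw [htwo, hy]; omega
    rw [h, digitSum_two_mul_add_one, htwo, digitSum_two_mul]
    rw [hy] at ih ⊢
    simp only [Nat.add_sub_cancel] at ih
    omega

lemma digitSum_succ_div_two_pow_ne_iff {j s o : ℕ} (ho : Odd o) (hj : j + 1 = 2 ^ s * o)
    (u : ℕ) :
    digitSum ((j + 1) / 2 ^ u) % 2 ≠ digitSum (j / 2 ^ u) % 2 ↔ u ≤ s ∧ Even (s - u) := by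
  by_cases hu : u ≤ s
  · have hdvd : 2 ^ u ∣ j + 1 := hj ▸ Dvd.dvd.mul_right (pow_dvd_pow 2 hu) o
    have hquot : (j + 1) / 2 ^ u = 2 ^ (s - u) * o := by
      rw [hj, ← Nat.sub_add_cancel hu, pow_add, Nat.add_sub_cancel, mul_comm (2 ^ (s - u)),
        mul_assoc, Nat.mul_div_cancel_left _ (by positivity)]
    have hpred : j / 2 ^ u = 2 ^ (s - u) * o - 1 := by
      rw [← hquot, Nat.succ_div_of_dvd hdvd, Nat.add_sub_cancel]
    have := digitSum_two_pow_mul_sub_one ho (s - u)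
    rw [hquot, hpred, Nat.even_iff]
    omega
  · have hndvd : ¬ 2 ^ u ∣ j + 1 := by
      obtain ⟨w, rfl⟩ : ∃ w, u = s + (w + 1) := ⟨u - s - 1, by omega⟩
      rw [hj, pow_add]
      intro h
      have h2 : 2 ∣ o :=
        (dvd_pow_self 2 w.succ_ne_zero).trans (Nat.dvd_of_mul_dvd_mul_left (by positivity) h)
      exact (Nat.not_even_iff_odd.2 ho) (even_iff_two_dvd.2 h2)
    simp [Nat.succ_div_of_not_dvd hndvd, hu]
lemma sum_range_mul_two_pow_lt {f : ℕ → ℕ} (hf : ∀ t, f t ≤ 1) (T : ℕ) :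
    ∑ t ∈ range T, f t * 2 ^ t < 2 ^ T := by
  induction T with
  | zero => simp
  | succ T ih =>
    rw [sum_range_succ, pow_succ]
    nlinarith [hf T, pow_pos (two_pos : (0 : ℕ) < 2) T]

lemma sum_range_mul_two_pow_div_mod_two {f : ℕ → ℕ} (hf : ∀ t, f t ≤ 1) {T u : ℕ}
    (hu : u < T) : (∑ t ∈ range T, f t * 2 ^ t) / 2 ^ u % 2 = f u := by
  induction T with
  | zero => omega
  | succ T ih =>
    rw [sum_range_succ]
    rcases (Nat.lt_succ_iff_lt_or_eq.1 hu) with hu | rfl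
    · obtain ⟨w, rfl⟩ : ∃ w, T = u + (w + 1) := ⟨T - u - 1, by omega⟩
      have hsplit : f (u + (w + 1)) * 2 ^ (u + (w + 1))
          = f (u + (w + 1)) * 2 ^ w * 2 * 2 ^ u := by ring
      rw [hsplit, Nat.add_mul_div_right _ _ (by positivity), Nat.add_mul_mod_self_right, ih hu]
    · rw [Nat.add_mul_div_right _ _ (by positivity),
        Nat.div_eq_of_lt (sum_range_mul_two_pow_lt hf u), zero_add]
      exact Nat.mod_eq_of_lt (Nat.lt_succ_of_le (hf u))

lemma mod_two_pow_div_two_pow_mod_two (n : ℕ) {t T : ℕ} (ht : t < T) :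
    n % 2 ^ T / 2 ^ t % 2 = n / 2 ^ t % 2 := by
  obtain ⟨w, rfl⟩ : ∃ w, T = t + (w + 1) := ⟨T - t - 1, by omega⟩
  rw [pow_add, Nat.mod_mul_right_div_self, Nat.mod_mod_of_dvd _ (dvd_pow_self 2 w.succ_ne_zero)]

def psiDigit (n i : ℕ) : ℕ := (nthDigit 2 n (i - 1) + nthDigit 2 n i) % 2

lemma psiMap_eq_sum (m n : ℕ) :
    psiMap m n = ∑ i ∈ Icc 1 m, (psiDigit n i : ℝ) / 2 ^ i := rfl

lemma psiDigit_le_one (n i : ℕ) : psiDigit n i ≤ 1 :=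
  Nat.le_of_lt_succ (Nat.mod_lt _ two_pos)

lemma sum_Icc_psiDigit_div_le (n : ℕ) {u v : ℕ} (h : u ≤ v) :
    ∑ i ∈ Icc (u + 1) v, (psiDigit n i : ℝ) / 2 ^ i ≤ 1 / 2 ^ u - 1 / 2 ^ v := by
  induction v, h using Nat.le_induction with
  | base => simp
  | succ v hv ih =>
    rw [sum_Icc_succ_top (by omega)]
    have hd : (psiDigit n (v + 1) : ℝ) ≤ 1 := by exact_mod_cast psiDigit_le_one n (v + 1)
    have hterm : (psiDigit n (v + 1) : ℝ) / 2 ^ (v + 1) ≤ 1 / 2 ^ (v + 1) := by gcongr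
    have hhalf : (1 : ℝ) / 2 ^ (v + 1) = 1 / 2 ^ v - 1 / 2 ^ (v + 1) := by
      rw [pow_succ]; field_simp; norm_num
    linarith

lemma psiMap_nonneg (m n : ℕ) : 0 ≤ psiMap m n := by
  rw [psiMap_eq_sum]; positivity

lemma psiMap_le_one (m n : ℕ) : psiMap m n ≤ 1 := by
  have h := sum_Icc_psiDigit_div_le n (Nat.zero_le m)
  rw [zero_add, pow_zero, div_one] at h
  rw [psiMap_eq_sum]
  linarith [show (0 : ℝ) ≤ 1 / 2 ^ m by positivity]

noncomputable def psiTail (m k n : ℕ) : ℝ :=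
  ∑ i ∈ Icc (k + 2) m, (psiDigit n i : ℝ) / 2 ^ i

lemma psiTail_nonneg (m k n : ℕ) : 0 ≤ psiTail m k n := by
  unfold psiTail; positivity

lemma psiTail_lt {m k : ℕ} (hkm : k + 1 ≤ m) (n : ℕ) : psiTail m k n < 1 / 2 ^ (k + 1) := by
  have h := sum_Icc_psiDigit_div_le n hkm
  rw [psiTail]
  linarith [show (0 : ℝ) < 1 / 2 ^ m by positivity]

lemma psiTail_congr (m : ℕ) {k n n' : ℕ} (h : n / 2 ^ k = n' / 2 ^ k) :
    psiTail m k n = psiTail m k n' := by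
  have hdigit : ∀ i, k < i → nthDigit 2 n i = nthDigit 2 n' i := by
    intro i hi
    simp only [nthDigit, if_neg (show i ≠ 0 by omega)]
    rw [show i - 1 = k + (i - 1 - k) by omega, pow_add, ← Nat.div_div_eq_div_mul,
      ← Nat.div_div_eq_div_mul, h]
  refine sum_congr rfl fun i hi => ?_
  rw [mem_Icc] at hi
  rw [psiDigit, psiDigit, hdigit i (by omega), hdigit (i - 1) (by omega)]

-- `psiInvBit k j t` is binary digit `t` of the residue mod `2^(k+1)` whose first `k + 1`
-- digits of `ψ` spell `j` from the most significant end (see `psiDigit_of_mod_eq_psiInv`).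
def psiInvBit (k j t : ℕ) : ℕ := digitSum (j / 2 ^ (k - t)) % 2

def psiInv (k j : ℕ) : ℕ := ∑ t ∈ range (k + 1), psiInvBit k j t * 2 ^ t

lemma psiInvBit_le_one (k j t : ℕ) : psiInvBit k j t ≤ 1 :=
  Nat.le_of_lt_succ (Nat.mod_lt _ two_pos)

lemma psiInv_lt (k j : ℕ) : psiInv k j < 2 ^ (k + 1) :=
  sum_range_mul_two_pow_lt (psiInvBit_le_one k j) _

lemma div_two_pow_mod_two_of_mod_eq_psiInv {k j n t : ℕ} (hn : n % 2 ^ (k + 1) = psiInv k j)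
    (ht : t ≤ k) : n / 2 ^ t % 2 = psiInvBit k j t := by
  rw [← mod_two_pow_div_two_pow_mod_two n (Nat.lt_succ_of_le ht), hn, psiInv,
    sum_range_mul_two_pow_div_mod_two (psiInvBit_le_one k j) (Nat.lt_succ_of_le ht)]

lemma nthDigit_of_mod_eq_psiInv {k j n i : ℕ} (hj : j < 2 ^ (k + 1))
    (hn : n % 2 ^ (k + 1) = psiInv k j) (hi : i ≤ k + 1) :
    nthDigit 2 n i = digitSum (j / 2 ^ (k + 1 - i)) % 2 := by
  rcases Nat.eq_zero_or_pos i with rfl | hi0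
  · simp [nthDigit, Nat.div_eq_of_lt hj, digitSum]
  · rw [nthDigit, if_neg hi0.ne', div_two_pow_mod_two_of_mod_eq_psiInv hn (by omega), psiInvBit,
      show k - (i - 1) = k + 1 - i by omega]

lemma psiDigit_of_mod_eq_psiInv {k j n i : ℕ} (hj : j < 2 ^ (k + 1))
    (hn : n % 2 ^ (k + 1) = psiInv k j) (hi : 1 ≤ i) (hik : i ≤ k + 1) :
    psiDigit n i = j / 2 ^ (k + 1 - i) % 2 := by
  rw [psiDigit, nthDigit_of_mod_eq_psiInv hj hn hik, nthDigit_of_mod_eq_psiInv hj hn (by omega),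
    show k + 1 - (i - 1) = k + 1 - i + 1 by omega, pow_succ, ← Nat.div_div_eq_div_mul,
    digitSum_eq (j / 2 ^ (k + 1 - i))]
  omega
lemma sum_Icc_div_two_pow_mod_two {T j : ℕ} (hj : j < 2 ^ T) :
    ∑ i ∈ Icc 1 T, ((j / 2 ^ (T - i) % 2 : ℕ) : ℝ) / 2 ^ i = j / 2 ^ T := by
  induction T generalizing j with
  | zero => simp_all
  | succ T ih =>
    have hhalf : j / 2 < 2 ^ T := by rw [pow_succ] at hj; omega
    have hshift : ∀ i ∈ Icc 1 T, ((j / 2 ^ (T + 1 - i) % 2 : ℕ) : ℝ) / 2 ^ i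
        = ((j / 2 / 2 ^ (T - i) % 2 : ℕ) : ℝ) / 2 ^ i := by
      intro i hi
      rw [mem_Icc] at hi
      rw [Nat.div_div_eq_div_mul, ← pow_succ', show T - i + 1 = T + 1 - i by omega]
    rw [sum_Icc_succ_top (by omega), sum_congr rfl hshift, ih hhalf, Nat.sub_self, pow_zero,
      Nat.div_one]
    have hj2 : (j : ℝ) = 2 * (j / 2 : ℕ) + (j % 2 : ℕ) := by
      exact_mod_cast (Nat.div_add_mod j 2).symm
    rw [hj2, pow_succ]
    field_simp

lemma psiMap_eq_of_mod_eq_psiInv {m k j n : ℕ} (hkm : k + 1 ≤ m) (hj : j < 2 ^ (k + 1))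
    (hn : n % 2 ^ (k + 1) = psiInv k j) : psiMap m n = j / 2 ^ (k + 1) + psiTail m k n := by
  rw [psiMap_eq_sum, psiTail, ← sum_Icc_div_two_pow_mod_two hj]
  rw [show Icc 1 m = Ioc 0 m from Icc_add_one_left_eq_Ioc 0 m,
    show Icc 1 (k + 1) = Ioc 0 (k + 1) from Icc_add_one_left_eq_Ioc 0 (k + 1),
    show Icc (k + 2) m = Ioc (k + 1) m from Icc_add_one_left_eq_Ioc (k + 1) m]
  rw [← sum_Ioc_consecutive _ (Nat.zero_le (k + 1)) hkm]
  congr 1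
  refine sum_congr rfl fun i hi => ?_
  rw [mem_Ioc] at hi
  rw [psiDigit_of_mod_eq_psiInv hj hn hi.1 hi.2]

lemma psiInv_succ_sub (k j : ℕ) :
    (psiInv k (j + 1) : ℤ) - psiInv k j
      = ((psiInvBit k (j + 1) k : ℤ) - psiInvBit k j k) * 2 ^ k
        + ∑ t ∈ range k, ((psiInvBit k (j + 1) t : ℤ) - psiInvBit k j t) * 2 ^ t := by
  simp only [psiInv, sum_range_succ, sub_mul, sum_sub_distrib]
  push_cast
  ring

lemma abs_psiInvBit_succ_sub {j s o : ℕ} (ho : Odd o) (hj : j + 1 = 2 ^ s * o) (k t : ℕ) :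
    |(psiInvBit k (j + 1) t : ℤ) - psiInvBit k j t|
      = if k - t ≤ s ∧ Even (s - (k - t)) then 1 else 0 := by
  have hiff : psiInvBit k (j + 1) t ≠ psiInvBit k j t ↔ k - t ≤ s ∧ Even (s - (k - t)) :=
    digitSum_succ_div_two_pow_ne_iff ho hj (k - t)
  have h₁ := psiInvBit_le_one k (j + 1) t
  have h₀ := psiInvBit_le_one k j t
  split_ifs with h
  · have hne := hiff.2 h
    rcases abs_cases ((psiInvBit k (j + 1) t : ℤ) - psiInvBit k j t) with ⟨ha, hb⟩ | ⟨ha, hb⟩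
      <;> omega
  · simp [not_not.1 (mt hiff.1 h)]

lemma three_mul_sum_two_pow_same_parity_lt (k : ℕ) :
    3 * ∑ t ∈ range k, (if t % 2 = k % 2 then (2 : ℤ) ^ t else 0) < 2 ^ k := by
  induction k using Nat.twoStepInduction with
  | zero => simp
  | one => simp
  | more k ih _ =>
    have hpar : ∀ t, (t % 2 = (k + 2) % 2 ↔ t % 2 = k % 2) := by omega
    simp only [hpar, sum_range_succ, show ¬ (k + 1) % 2 = k % 2 by omega, if_true, if_false,
      add_zero, pow_succ]
    linarith

lemma psiInv_succ_sub_bounds {j s o : ℕ} (ho : Odd o) (hj : j + 1 = 2 ^ s * o) (hs : Even s)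
    (k : ℕ) :
    2 * 2 ^ k < 3 * |(psiInv k (j + 1) : ℤ) - psiInv k j| ∧
      3 * |(psiInv k (j + 1) : ℤ) - psiInv k j| < 4 * 2 ^ k := by
  have hc := abs_psiInvBit_succ_sub ho hj k
  have htop : |(psiInvBit k (j + 1) k : ℤ) - psiInvBit k j k| = 1 := by simp [hc, hs]
  have hlow : |∑ t ∈ range k, ((psiInvBit k (j + 1) t : ℤ) - psiInvBit k j t) * 2 ^ t|
      ≤ ∑ t ∈ range k, (if t % 2 = k % 2 then (2 : ℤ) ^ t else 0) := by
    refine (abs_sum_le_sum_abs _ _).trans (sum_le_sum fun t ht => ?_)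
    rw [mem_range] at ht
    rw [abs_mul, hc t, abs_pow, abs_two]
    split_ifs with h₁ h₂ h₂
    · simp
    · rw [Nat.even_iff] at h₁ hs; omega
    · simp
    · simp
  have hsmall := three_mul_sum_two_pow_same_parity_lt k
  rw [psiInv_succ_sub]
  rcases (abs_eq zero_le_one).1 htop with h | h <;> rw [h] <;>
    rcases abs_le.1 hlow with ⟨hl, hu⟩ <;>
    rcases abs_cases (_ : ℤ) with ⟨ha, _⟩ | ⟨ha, _⟩ <;> rw [ha] <;>
    constructor <;> linarith

lemma psiInv_succ_of_even {j : ℕ} (hj : Even j) (k : ℕ) :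
    psiInv k (j + 1) = psiInv k j + 2 ^ k ∨ psiInv k j = psiInv k (j + 1) + 2 ^ k := by
  have hc := abs_psiInvBit_succ_sub hj.add_one (by rw [pow_zero, one_mul]) k
  have hlow : ∑ t ∈ range k, ((psiInvBit k (j + 1) t : ℤ) - psiInvBit k j t) * 2 ^ t = 0 := by
    refine sum_eq_zero fun t ht => ?_
    rw [mem_range] at ht
    have h := hc t
    rw [if_neg (by omega), abs_eq_zero] at h
    rw [h, zero_mul]
  have htop : |(psiInvBit k (j + 1) k : ℤ) - psiInvBit k j k| = 1 := by simp [hc]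
  have hdiff := psiInv_succ_sub k j
  rw [hlow, add_zero] at hdiff
  rcases (abs_eq zero_le_one).1 htop with h | h <;> rw [h] at hdiff
  · left; zify; linarith
  · right; zify; linarith

lemma psiMap_mem_Ico {m k j n : ℕ} (hkm : k + 1 ≤ m) (hj : j < 2 ^ (k + 1))
    (hn : n % 2 ^ (k + 1) = psiInv k j) :
    (j : ℝ) ≤ 2 ^ (k + 1) * psiMap m n ∧ 2 ^ (k + 1) * psiMap m n < j + 1 := by
  have hM : (0 : ℝ) < 2 ^ (k + 1) := by positivity
  have hT := psiTail_lt hkm n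
  rw [lt_div_iff₀ hM, mul_comm] at hT
  have hT₀ := mul_nonneg hM.le (psiTail_nonneg m k n)
  rw [psiMap_eq_of_mod_eq_psiInv hkm hj hn, mul_add, mul_div_cancel₀ _ hM.ne']
  constructor <;> linarith

lemma exists_mem_Ico_mod_eq (a : ℕ) {M ρ : ℕ} (hρ : ρ < M) :
    ∃ n, a ≤ n ∧ n < a + M ∧ n % M = ρ := by
  have hM : 0 < M := by omega
  have hr := Nat.mod_lt (ρ + (M - a % M)) hM
  refine ⟨a + (ρ + (M - a % M)) % M, by omega, by omega, ?_⟩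
  have ha := Nat.div_add_mod a M
  have hlt := Nat.mod_lt a hM
  have hsum : a + (ρ + (M - a % M)) = ρ + M * (a / M + 1) := by rw [Nat.mul_succ]; omega
  rw [Nat.add_mod_mod, hsum, Nat.add_mul_mod_self_left, Nat.mod_eq_of_lt hρ]

lemma not_dvd_sub_of_mem_Ico {K a n₁ n₂ : ℕ} {Δ : ℤ} (h₁ : a + 4 * K / 3 ≤ n₁)
    (h₁' : n₁ < a + 2 * K) (h₂ : a + 4 * K / 3 ≤ n₂) (h₂' : n₂ < a + 2 * K)
    (hlo : 2 * K < 3 * |Δ|) (hhi : 3 * |Δ| < 4 * K) :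
    ¬ (2 * K : ℤ) ∣ Δ - (n₂ - n₁) := by
  rintro ⟨q, hq⟩
  have hK : (0 : ℤ) ≤ 2 * K := by positivity
  rcases abs_cases Δ with ⟨hΔ, _⟩ | ⟨hΔ, _⟩ <;> rw [hΔ] at hlo hhi <;>
  · have hq₁ : q < 2 := by
      by_contra! h
      have := mul_le_mul_of_nonneg_left h hK
      omega
    have hq₂ : -2 < q := by
      by_contra! h
      have := mul_le_mul_of_nonneg_left h hK
      omega
    interval_cases q <;> omega

lemma sub_mod_two_mul_eq {K n r r' : ℕ} (hn : n % (2 * K) = r) (hK : K ≤ n)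
    (hr' : r' < 2 * K) (h : r = r' + K ∨ r' = r + K) : (n - K) % (2 * K) = r' := by
  have hr : r < 2 * K := hn ▸ Nat.mod_lt n (by omega)
  rw [← Nat.mod_eq_of_lt hr']
  refine Nat.ModEq.add_right_cancel' K ?_
  show (n - K + K) % (2 * K) = (r' + K) % (2 * K)
  rw [Nat.sub_add_cancel hK, hn]
  rcases h with rfl | rfl
  · exact (Nat.mod_eq_of_lt hr).symm
  · rw [add_assoc, ← two_mul, Nat.add_mod_right, Nat.mod_eq_of_lt hr]

lemma div_eq_div_of_mod_two_eq {K u v : ℕ} (hK : 0 < K) (huv : u < v + K) (hvu : v < u + K)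
    (h : u / K % 2 = v / K % 2) : u / K = v / K := by
  have h₁ : u / K ≤ v / K + 1 := by
    rw [← Nat.add_div_right _ hK]; exact Nat.div_le_div_right huv.le
  have h₂ : v / K ≤ u / K + 1 := by
    rw [← Nat.add_div_right _ hK]; exact Nat.div_le_div_right hvu.le
  omega

lemma mem_Icc_add_div_of_mul_le {M x y c : ℝ} (hM : 0 < M) (h₁ : x * M ≤ M * y)
    (h₂ : M * y ≤ x * M + c) : y ∈ Set.Icc x (x + c / M) := by
  constructor
  · nlinarith
  · rw [← mul_le_mul_iff_of_pos_left hM, mul_add, mul_div_cancel₀ _ hM.ne']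
    linarith

lemma psiInv_mod_ne_of_even {k a j s o n₁ n₂ : ℕ} (ho : Odd o) (hso : j + 1 = 2 ^ s * o)
    (hs : Even s) (h₁ : a + 4 * 2 ^ k / 3 ≤ n₁) (h₁' : n₁ < a + 2 * 2 ^ k)
    (h₂ : a + 4 * 2 ^ k / 3 ≤ n₂) (h₂' : n₂ < a + 2 * 2 ^ k)
    (hn₁ : n₁ % 2 ^ (k + 1) = psiInv k j) : n₂ % 2 ^ (k + 1) ≠ psiInv k (j + 1) := by
  intro hn₂
  have hMK : 2 ^ (k + 1) = 2 * 2 ^ k := pow_succ' 2 k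
  have e₁ : n₁ ≡ psiInv k j [MOD 2 * 2 ^ k] := by
    rw [Nat.ModEq, ← hMK, hn₁, Nat.mod_eq_of_lt (psiInv_lt k j)]
  have e₂ : n₂ ≡ psiInv k (j + 1) [MOD 2 * 2 ^ k] := by
    rw [Nat.ModEq, ← hMK, hn₂, Nat.mod_eq_of_lt (psiInv_lt k (j + 1))]
  have hdvd := ((Int.natCast_modEq_iff.2 e₂).sub (Int.natCast_modEq_iff.2 e₁)).dvd
  push_cast at hdvd
  obtain ⟨hlo, hhi⟩ := psiInv_succ_sub_bounds ho hso hs k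
  exact not_dvd_sub_of_mem_Ico h₁ h₁' h₂ h₂' (by exact_mod_cast hlo) (by exact_mod_cast hhi)
    hdvd

lemma exists_psiMap_add_three_of_odd {m k a j s o n₁ n₂ : ℕ} (hkm : k + 1 ≤ m)
    (hj : j + 2 < 2 ^ (k + 1)) (ho : Odd o) (hso : j + 1 = 2 ^ s * o) (hs : Odd s)
    (h₁ : a + 4 * 2 ^ k / 3 ≤ n₁) (h₁' : n₁ < a + 2 * 2 ^ k)
    (h₂ : a + 4 * 2 ^ k / 3 ≤ n₂) (h₂' : n₂ < a + 2 * 2 ^ k)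
    (hn₁ : n₁ % 2 ^ (k + 1) = psiInv k j) (hn₂ : n₂ % 2 ^ (k + 1) = psiInv k (j + 1)) :
    ∃ n n', a ≤ n ∧ n < a + 4 * 2 ^ k / 3 ∧ a ≤ n' ∧ n' < a + 4 * 2 ^ k / 3 ∧
      (j : ℝ) - 1 ≤ 2 ^ (k + 1) * psiMap m n ∧ 2 ^ (k + 1) * psiMap m n < j ∧
      2 ^ (k + 1) * psiMap m n' = 2 ^ (k + 1) * psiMap m n + 3 := by
  obtain ⟨i, rfl⟩ : ∃ i, j = 2 * i + 1 := by
    have : Even (j + 1) := by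
      rw [hso]; exact (Nat.even_pow.2 ⟨even_two, hs.pos.ne'⟩).mul_right o
    exact ⟨j / 2, by rw [Nat.even_iff] at this; omega⟩
  have hMK : 2 ^ (k + 1) = 2 * 2 ^ k := pow_succ' 2 k
  -- Shifting by `2^k` moves `n₁`, `n₂` into the block, onto the residues of `j - 1` and `j + 2`.
  have hnm : (n₁ - 2 ^ k) % 2 ^ (k + 1) = psiInv k (2 * i) := by
    rw [hMK] at hn₁ ⊢
    exact sub_mod_two_mul_eq hn₁ (by omega) (hMK ▸ psiInv_lt k _)
      (psiInv_succ_of_even (even_two_mul i) k)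
  have hnp : (n₂ - 2 ^ k) % 2 ^ (k + 1) = psiInv k (2 * i + 1 + 1 + 1) := by
    rw [hMK] at hn₂ ⊢
    exact sub_mod_two_mul_eq hn₂ (by omega) (hMK ▸ psiInv_lt k _)
      (psiInv_succ_of_even ⟨i + 1, by ring⟩ k).symm
  have htop : psiInvBit k (2 * i + 1 + 1) k = psiInvBit k (2 * i + 1) k := by
    have h := abs_psiInvBit_succ_sub ho hso k k
    simp only [Nat.sub_self, Nat.sub_zero, zero_le, true_and, Nat.not_even_iff_odd.2 hs,
      if_false, abs_eq_zero, sub_eq_zero] at h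
    exact_mod_cast h
  have hdiv : n₁ / 2 ^ k = n₂ / 2 ^ k := div_eq_div_of_mod_two_eq (by positivity)
    (by omega) (by omega) (by rw [div_two_pow_mod_two_of_mod_eq_psiInv hn₁ le_rfl,
      div_two_pow_mod_two_of_mod_eq_psiInv hn₂ le_rfl, htop])
  have hsub : ∀ n, (n - 2 ^ k) / 2 ^ k = n / 2 ^ k - 1 := fun n => by
    simpa using Nat.sub_mul_div n (2 ^ k) 1
  have htail : psiTail m k (n₁ - 2 ^ k) = psiTail m k (n₂ - 2 ^ k) :=
    psiTail_congr m (by rw [hsub, hsub, hdiv])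
  obtain ⟨hlo, hhi⟩ := psiMap_mem_Ico hkm (by omega) hnm
  refine ⟨n₁ - 2 ^ k, n₂ - 2 ^ k, by omega, by omega, by omega, by omega, ?_, ?_, ?_⟩
  · push_cast at hlo ⊢; linarith
  · push_cast at hhi ⊢; linarith
  · rw [psiMap_eq_of_mod_eq_psiInv hkm (by omega) hnm,
      psiMap_eq_of_mod_eq_psiInv hkm (by omega) hnp, htail]
    push_cast
    field_simp
    ring

theorem exists_psiMap_mem_Icc {m k : ℕ} (hkm : k + 1 ≤ m) (a : ℕ) {x : ℝ} (hx₀ : 0 ≤ x)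
    (hx₁ : x + 3 / 2 ^ (k + 1) ≤ 1) :
    ∃ n, a ≤ n ∧ n < a + 2 ^ (k + 2) / 3 ∧
      psiMap m n ∈ Set.Icc x (x + 3 / 2 ^ (k + 1)) := by
  have hM : (0 : ℝ) < 2 ^ (k + 1) := by positivity
  have hMK : 2 ^ (k + 1) = 2 * 2 ^ k := pow_succ' 2 k
  have hNK : 2 ^ (k + 2) / 3 = 4 * 2 ^ k / 3 := by rw [pow_add]; norm_num [mul_comm]
  set j := ⌈x * 2 ^ (k + 1)⌉₊
  have hj₁ : x * 2 ^ (k + 1) ≤ j := Nat.le_ceil _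
  have hj₂ : (j : ℝ) < x * 2 ^ (k + 1) + 1 := Nat.ceil_lt_add_one (by positivity)
  have hj₃ : j + 2 < 2 ^ (k + 1) := by
    have := mul_le_mul_of_nonneg_right hx₁ hM.le
    rw [add_mul, div_mul_cancel₀ _ hM.ne', one_mul] at this
    exact_mod_cast (show (j : ℝ) + 2 < 2 ^ (k + 1) by linarith)
  clear_value j
  have hfits : ∀ j' n, j ≤ j' → j' ≤ j + 1 → n % 2 ^ (k + 1) = psiInv k j' →
      psiMap m n ∈ Set.Icc x (x + 3 / 2 ^ (k + 1)) := by
    intro j' n h₁ h₂ hn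
    obtain ⟨hlo, hhi⟩ := psiMap_mem_Ico hkm (by omega) hn
    have : (j : ℝ) ≤ j' := by exact_mod_cast h₁
    have : (j' : ℝ) ≤ j + 1 := by exact_mod_cast h₂
    exact mem_Icc_add_div_of_mul_le hM (by linarith) (by linarith)
  obtain ⟨n₁, ha₁, hb₁, hn₁⟩ := exists_mem_Ico_mod_eq a (psiInv_lt k j)
  obtain ⟨n₂, ha₂, hb₂, hn₂⟩ := exists_mem_Ico_mod_eq a (psiInv_lt k (j + 1))
  rw [hNK]
  by_cases h₁ : n₁ < a + 4 * 2 ^ k / 3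
  · exact ⟨n₁, ha₁, h₁, hfits j n₁ le_rfl (by omega) hn₁⟩
  by_cases h₂ : n₂ < a + 4 * 2 ^ k / 3
  · exact ⟨n₂, ha₂, h₂, hfits (j + 1) n₂ (by omega) le_rfl hn₂⟩
  rw [not_lt] at h₁ h₂
  rw [hMK] at hb₁ hb₂
  obtain ⟨s, o, ho, hso⟩ := Nat.exists_eq_two_pow_mul_odd j.succ_ne_zero
  rcases Nat.even_or_odd s with hs | hs
  · exact absurd hn₂ (psiInv_mod_ne_of_even ho hso hs h₁ hb₁ h₂ hb₂ hn₁)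
  obtain ⟨n, n', ha, hb, ha', hb', hlo, hhi, hψ⟩ :=
    exists_psiMap_add_three_of_odd hkm hj₃ ho hso hs h₁ hb₁ h₂ hb₂ hn₁ hn₂
  by_cases hx : x ≤ psiMap m n
  · exact ⟨n, ha, hb, mem_Icc_add_div_of_mul_le hM (by nlinarith) (by linarith)⟩
  · exact ⟨n', ha', hb', mem_Icc_add_div_of_mul_le hM (by linarith) (by nlinarith)⟩

end PsiGap

open PsiGap in
theorem psi_gap_B_general (m k a : ℕ) (hm : 2 ≤ m) (hkm : k ≤ m - 1) (S : Set ℝ)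
    (hS : S = {0, 1} ∪ (fun n => psiMap m n) '' {n : ℕ | a ≤ n ∧ n < a + 2 ^ (k + 2) / 3}) :
    ∀ t₁ ∈ S, ∀ t₂ ∈ S, t₁ < t₂ → (∀ t ∈ S, ¬(t₁ < t ∧ t < t₂)) →
      t₂ - t₁ ≤ 3 / (2 : ℝ) ^ (k + 1) := by
  intro t₁ ht₁ t₂ ht₂ _ hempty
  have hS01 : S ⊆ Set.Icc 0 1 := by
    rw [hS]
    rintro t (ht | ⟨n, -, rfl⟩)
    · rcases ht with rfl | rfl <;> simp
    · exact ⟨psiMap_nonneg m n, psiMap_le_one m n⟩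
  by_contra! hgap
  obtain ⟨n, han, hna, hψ⟩ := exists_psiMap_mem_Icc (by omega : k + 1 ≤ m) a
    (x := (t₁ + t₂ - 3 / 2 ^ (k + 1)) / 2) (by linarith [(hS01 ht₁).1])
    (by linarith [(hS01 ht₂).2])
  have hnS : psiMap m n ∈ S := by
    rw [hS]; exact Or.inr ⟨n, ⟨han, hna⟩, rfl⟩
  exact hempty _ hnS ⟨by linarith [hψ.1], by linarith [hψ.2]⟩

/-- For a set `B` of `⌊(4/3)·2^k⌋` consecutive integers in `{1,…,2^m−1}` with
`k ∈ {1,…,m−1}`, every gap of `ψ(B) ∪ {0,1}` is at most `3/2^{k+1}`. -/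
theorem psi_gap_B (m k a : ℕ) (hm : 2 ≤ m) (hk1 : 1 ≤ k) (hkm : k ≤ m - 1)
    (ha1 : 1 ≤ a) (ha2 : a + 2 ^ (k + 2) / 3 ≤ 2 ^ m) (S : Set ℝ)
    (hS : S = {0, 1} ∪ (fun n => psiMap m n) '' {n : ℕ | a ≤ n ∧ n < a + 2 ^ (k + 2) / 3}) :
    ∀ t₁ ∈ S, ∀ t₂ ∈ S, t₁ < t₂ → (∀ t ∈ S, ¬(t₁ < t ∧ t < t₂)) →
      t₂ - t₁ ≤ 3 / (2 : ℝ) ^ (k + 1) :=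
  psi_gap_B_general m k a hm hkm S hS
end

section
/- Let b ≥ 2 and m ≥ 2 be integers. Then for every w ∈ {2,…,b}, the open box (1/b − w/b^m, 1/b + 1/b^m) × (1/b^m, (b−w+2)/b − b/b^m) contains no point of the Hammersley point set H_{b,m}; equivalently, for all n ∈ {b^{m−1}−w+1,…,b^{m−1}} one has φ_b(n) ∉ (1/b^m, (b−w+2)/b − b/b^m). -/
/-- The radical-inverse (digit-reversal) function in base `b`, using `m` digits:
`φ_b(n) = e₁/b + e₂/b² + ⋯ + e_m/b^m`. -/
noncomputable def radInv (b m n : ℕ) : ℝ :=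
  ∑ i ∈ Finset.Icc 1 m, (nthDigit b n i : ℝ) / (b : ℝ) ^ i

/-!
The box pins the first coordinate down to `n = b^(m-1) - k` with `0 ≤ k < w`. Peeling off the
lowest digit, `φ_b(e + b q) = e/b + φ_b(q)/b` (one digit fewer on the right), so the digits of
these `n` can be read off: `φ_b(b^(m-1)) = 1/b^m` is the lower edge of the second interval, while
for `k ≥ 1` the digits are `b - k, b - 1, …, b - 1, 0`, whence
`φ_b(n) = (b - k + 1)/b - 1/b^(m-1)`, which is at least the upper edge `(b - w + 2)/b - b/b^m`
because `k ≤ w - 1`.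
-/

open Finset

lemma radInv_eq_sum_range (b m n : ℕ) :
    radInv b m n = ∑ i ∈ range m, (n / b ^ i % b : ℕ) / (b : ℝ) ^ (i + 1) := by
  rw [radInv, ← Ico_add_one_right_eq_Icc, sum_Ico_eq_sum_range, Nat.add_sub_cancel]
  simp [nthDigit, add_comm 1]

lemma radInv_succ (b m n : ℕ) :
    radInv b (m + 1) n = (n % b : ℕ) / (b : ℝ) + radInv b m (n / b) / b := by
  simp only [radInv_eq_sum_range, sum_range_succ', sum_div, Nat.div_div_eq_div_mul, ← pow_succ',
    pow_zero, Nat.div_one, zero_add, pow_one]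
  rw [add_comm]
  congr 1
  refine sum_congr rfl fun i _ => ?_
  rw [div_div, ← pow_succ]

lemma radInv_add_mul {b e : ℕ} (he : e < b) (m q : ℕ) :
    radInv b (m + 1) (e + b * q) = e / (b : ℝ) + radInv b m q / b := by
  rw [radInv_succ, Nat.add_mul_mod_self_left, Nat.mod_eq_of_lt he,
    Nat.add_mul_div_left _ _ (by omega), Nat.div_eq_of_lt he, zero_add]

lemma radInv_pow {b : ℕ} (hb : 2 ≤ b) (m : ℕ) :
    radInv b (m + 1) (b ^ m) = 1 / (b : ℝ) ^ (m + 1) := by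
  induction m with
  | zero => simpa [radInv] using radInv_add_mul (by omega : 1 < b) 0 0
  | succ m ih =>
    rw [pow_succ', ← zero_add (b * _), radInv_add_mul (by omega), ih, Nat.cast_zero, zero_div,
      zero_add, div_div, ← pow_succ]

lemma radInv_pow_sub_one {b : ℕ} (hb : 1 ≤ b) (m : ℕ) :
    radInv b (m + 1) (b ^ m - 1) = 1 - 1 / (b : ℝ) ^ m := by
  induction m with
  | zero => simpa [radInv] using radInv_add_mul (by omega : 0 < b) 0 0
  | succ m ih =>
    have hsplit : b ^ (m + 1) - 1 = (b - 1) + b * (b ^ m - 1) := by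
      have := Nat.le_mul_of_pos_right b (Nat.one_le_pow m b hb)
      rw [pow_succ', Nat.mul_sub, mul_one]; omega
    rw [hsplit, radInv_add_mul (by omega), ih, Nat.cast_sub hb]
    field_simp
    ring

lemma radInv_pow_sub {b k : ℕ} (hk : 1 ≤ k) (hkb : k ≤ b) (m : ℕ) :
    radInv b (m + 2) (b ^ (m + 1) - k) = ((b : ℝ) - k + 1) / b - 1 / (b : ℝ) ^ (m + 1) := by
  have hsplit : b ^ (m + 1) - k = (b - k) + b * (b ^ m - 1) := by
    have := Nat.le_mul_of_pos_right b (Nat.one_le_pow m b (by omega))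
    rw [pow_succ', Nat.mul_sub, mul_one]; omega
  rw [hsplit, radInv_add_mul (by omega), radInv_pow_sub_one (by omega), Nat.cast_sub hkb]
  have : (b : ℝ) ≠ 0 := by norm_cast; omega
  field_simp
  ring

lemma radInv_notMem_Ioo_of_near_pow {b m w n : ℕ} (hb : 2 ≤ b) (hw : w ≤ b)
    (hn₁ : b ^ (m + 1) - w + 1 ≤ n) (hn₂ : n ≤ b ^ (m + 1)) :
    radInv b (m + 2) n ∉
      Set.Ioo (1 / (b : ℝ) ^ (m + 2)) (((b : ℝ) - w + 2) / b - 1 / (b : ℝ) ^ (m + 1)) := by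
  rintro ⟨hlo, hhi⟩
  obtain rfl | hlt := hn₂.eq_or_lt
  · rw [radInv_pow hb] at hlo
    exact hlo.false
  · obtain ⟨k, hk, hkw, rfl⟩ : ∃ k, 1 ≤ k ∧ k + 1 ≤ w ∧ n = b ^ (m + 1) - k :=
      ⟨b ^ (m + 1) - n, by omega, by omega, by omega⟩
    rw [radInv_pow_sub hk (by omega)] at hhi
    have hkw' : (k : ℝ) + 1 ≤ w := by exact_mod_cast hkw
    have : ((b : ℝ) - w + 2) / b ≤ ((b : ℝ) - k + 1) / b :=
      div_le_div_of_nonneg_right (by linarith) (by positivity)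
    linarith

lemma mem_Icc_of_div_pow_mem_Ioo {b m w n : ℕ} (hb : 0 < b) (hw : w ≤ b ^ m)
    (h : (n : ℝ) / (b : ℝ) ^ (m + 1) ∈
      Set.Ioo (1 / (b : ℝ) - w / (b : ℝ) ^ (m + 1)) (1 / (b : ℝ) + 1 / (b : ℝ) ^ (m + 1))) :
    n ∈ Set.Icc (b ^ m - w + 1) (b ^ m) := by
  have hinv : 1 / (b : ℝ) = (b : ℝ) ^ m / (b : ℝ) ^ (m + 1) := by
    field_simp; ring
  rw [hinv, ← sub_div, ← add_div, Set.mem_Ioo, div_lt_div_iff_of_pos_right (by positivity),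
    div_lt_div_iff_of_pos_right (by positivity)] at h
  have hlo : b ^ m < n + w := by exact_mod_cast (show (b : ℝ) ^ m < n + w by linarith [h.1])
  have hhi : n < b ^ m + 1 := by exact_mod_cast h.2
  constructor <;> omega

/-- For `b ≥ 2`, `m ≥ 2` and every `w ∈ {2,…,b}`, the open box
`(1/b − w/b^m, 1/b + 1/b^m) × (1/b^m, (b−w+2)/b − b/b^m)` contains no point of the
base-`b` Hammersley point set; equivalently, `φ_b(n) ∉ (1/b^m, (b−w+2)/b − b/b^m)` for
all `n ∈ {b^{m−1}−w+1,…,b^{m−1}}`. -/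
theorem hammersley_empty_box (b m : ℕ) (hb : 2 ≤ b) (hm : 2 ≤ m) :
    ∀ w : ℕ, 2 ≤ w → w ≤ b →
      (∀ n < b ^ m, ((n : ℝ) / (b : ℝ) ^ m, radInv b m n) ∉
        Set.Ioo (1 / (b : ℝ) - (w : ℝ) / (b : ℝ) ^ m) (1 / (b : ℝ) + 1 / (b : ℝ) ^ m) ×ˢ
        Set.Ioo (1 / (b : ℝ) ^ m) (((b : ℝ) - (w : ℝ) + 2) / (b : ℝ) - (b : ℝ) / (b : ℝ) ^ m)) ∧
      (∀ n : ℕ, b ^ (m - 1) - w + 1 ≤ n → n ≤ b ^ (m - 1) →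
        radInv b m n ∉
          Set.Ioo (1 / (b : ℝ) ^ m) (((b : ℝ) - (w : ℝ) + 2) / (b : ℝ) - (b : ℝ) / (b : ℝ) ^ m)) := by
  intro w _ hwb
  obtain ⟨j, rfl⟩ : ∃ j, m = j + 2 := ⟨m - 2, by omega⟩
  have hdiv : (b : ℝ) / (b : ℝ) ^ (j + 2) = 1 / (b : ℝ) ^ (j + 1) := by
    field_simp; ring
  simp only [hdiv]
  refine ⟨fun n _ hmem => ?_, fun n => radInv_notMem_Ioo_of_near_pow hb hwb⟩
  obtain ⟨hn₁, hn₂⟩ := mem_Icc_of_div_pow_mem_Ioo (by omega)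
    (hwb.trans (Nat.le_self_pow (by omega) b)) hmem.1
  exact radInv_notMem_Ioo_of_near_pow hb hwb hn₁ hn₂ hmem.2
end
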